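/- Let D = (V, A) be a digraph, let s be a nonnegative integer, let τ be a degree list function on V, and let C ⊆ V be a 2s(Δ_D + 1)-type set for (D, τ). If there exists a loopless arc set A' ⊆ (V × V) \ A with |A'| ≤ s such that deg_{D+A'}(v) ∈ τ(v) for all v ∈ V, then there exists a loopless arc set A* ⊆ (C × C) \ A with |A*| ≤ s such that deg_{D+A*}(v) ∈ τ(v) for all v ∈ V. -/

import Mathlib

/-- Indegree of vertex `v` in the digraph with arc set `A`. -/
def inDeg {V : Type*} [DecidableEq V] (A : Finset (V × V)) (v : V) : ℕ :=
  (A.filter fun a => a.2 = v).card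

/-- Outdegree of vertex `v` in the digraph with arc set `A`. -/
def outDeg {V : Type*} [DecidableEq V] (A : Finset (V × V)) (v : V) : ℕ :=
  (A.filter fun a => a.1 = v).card

/-- Degree pair (indegree, outdegree) of vertex `v`. -/
def deg {V : Type*} [DecidableEq V] (A : Finset (V × V)) (v : V) : ℕ × ℕ :=
  (inDeg A v, outDeg A v)

/-- Maximum in- or outdegree in the digraph with arc set `A`. -/
def maxDeg {V : Type*} [Fintype V] [DecidableEq V] (A : Finset (V × V)) : ℕ :=
  Finset.univ.sup fun v => max (inDeg A v) (outDeg A v)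

/-- The satisfied vertices of type `t` with respect to the degree list
function `τ`: vertices `v` with `deg v + t ∈ τ v` and `deg v ∈ τ v`,
i.e. `T_{D,τ}(t) \ U`. -/
def satType {V : Type*} [Fintype V] [DecidableEq V]
    (A : Finset (V × V)) (τ : V → Finset (ℕ × ℕ)) (t : ℕ × ℕ) : Finset V :=
  Finset.univ.filter fun v => deg A v + t ∈ τ v ∧ deg A v ∈ τ v

/-- `C` is an `α`-type set for `(D, τ)`: it contains all unsatisfied vertices
and, for each type `t ≠ (0,0)`, exactly `min |T_{D,τ}(t) \ U| α` satisfied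
vertices of type `t`. -/
def IsTypeSet {V : Type*} [Fintype V] [DecidableEq V]
    (A : Finset (V × V)) (τ : V → Finset (ℕ × ℕ)) (α : ℕ) (C : Finset V) : Prop :=
  (∀ v : V, deg A v ∉ τ v → v ∈ C) ∧
  ∀ t : ℕ × ℕ, t ≠ (0, 0) →
    (satType A τ t ∩ C).card = min (satType A τ t).card α

/-!
Take a solution whose arcs have as few endpoints outside `C` as possible, and suppose `u ∉ C` is
one of them. Since `C` contains every unsatisfied vertex, `u` is satisfied, hence a satisfied
vertex of the nonzero type `t = deg_{A'}(u)` lying outside `C`; so `C` contains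
`2s(Δ_D + 1)` satisfied vertices of type `t`. At most `2s - 1` of them are other endpoints of
`A'` and at most `2sΔ_D` are `A`-neighbours of endpoints of arcs of `A'`, so one of them, `w`,
is neither. Transposing `u` and `w` in `A'` isolates `u` (which keeps its satisfied degree),
gives `w` exactly the extra degree `t` it needs, creates no arc of `A` and no loop, and removes
`u` from the endpoints outside `C` without adding any.
-/

open Finset

section Degrees

variable {V : Type*}

def mapArcs (π : Equiv.Perm V) (B : Finset (V × V)) : Finset (V × V) :=
  B.map (π.prodCongr π).toEmbedding

lemma card_mapArcs (π : Equiv.Perm V) (B : Finset (V × V)) : (mapArcs π B).card = B.card :=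
  card_map _

variable [DecidableEq V]

lemma inDeg_union {A B : Finset (V × V)} (h : Disjoint A B) (v : V) :
    inDeg (A ∪ B) v = inDeg A v + inDeg B v := by
  rw [inDeg, inDeg, inDeg, filter_union, card_union_of_disjoint (disjoint_filter_filter h)]

lemma outDeg_union {A B : Finset (V × V)} (h : Disjoint A B) (v : V) :
    outDeg (A ∪ B) v = outDeg A v + outDeg B v := by
  rw [outDeg, outDeg, outDeg, filter_union, card_union_of_disjoint (disjoint_filter_filter h)]

lemma deg_union {A B : Finset (V × V)} (h : Disjoint A B) (v : V) :
    deg (A ∪ B) v = deg A v + deg B v := by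
  simp only [deg, inDeg_union h, outDeg_union h, Prod.mk_add_mk]

def endpoints (B : Finset (V × V)) : Finset V :=
  B.image Prod.fst ∪ B.image Prod.snd

lemma mem_endpoints {B : Finset (V × V)} {v : V} :
    v ∈ endpoints B ↔ ∃ a ∈ B, a.1 = v ∨ a.2 = v := by
  simp only [endpoints, mem_union, mem_image]
  grind

lemma card_endpoints_le (B : Finset (V × V)) : (endpoints B).card ≤ 2 * B.card :=
  calc (endpoints B).card ≤ (B.image Prod.fst).card + (B.image Prod.snd).card :=
        card_union_le _ _
    _ ≤ 2 * B.card := by grw [card_image_le, card_image_le, two_mul]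

lemma notMem_endpoints {B : Finset (V × V)} {v : V} :
    v ∉ endpoints B ↔ ∀ a ∈ B, a.1 ≠ v ∧ a.2 ≠ v := by
  simp only [mem_endpoints, not_exists, not_and, not_or, ne_eq]

lemma subset_product_of_endpoints_subset {B : Finset (V × V)} {C : Finset V}
    (h : endpoints B ⊆ C) : B ⊆ C ×ˢ C := fun a ha =>
  mem_product.2 ⟨h (mem_endpoints.2 ⟨a, ha, .inl rfl⟩), h (mem_endpoints.2 ⟨a, ha, .inr rfl⟩)⟩

lemma deg_eq_zero_iff_notMem_endpoints {B : Finset (V × V)} {v : V} :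
    deg B v = (0, 0) ↔ v ∉ endpoints B := by
  simp only [deg, inDeg, outDeg, Prod.mk.injEq, card_eq_zero, filter_eq_empty_iff,
    mem_endpoints]
  grind

variable (π : Equiv.Perm V) (B : Finset (V × V))

lemma deg_mapArcs (v : V) : deg (mapArcs π B) v = deg B (π.symm v) := by
  simp only [deg, inDeg, outDeg, mapArcs, filter_map, card_map]
  congr 2 <;> apply filter_congr <;> simp [Equiv.eq_symm_apply]

lemma endpoints_mapArcs : endpoints (mapArcs π B) = (endpoints B).image π := by
  simp only [endpoints, mapArcs, image_union, map_eq_image, image_image]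
  rfl

end Degrees

section Neighbours

variable {V : Type*} [DecidableEq V] (A : Finset (V × V)) (v : V)

def inNbrs : Finset V := (A.filter fun a => a.2 = v).image Prod.fst

def outNbrs : Finset V := (A.filter fun a => a.1 = v).image Prod.snd

variable {A v}

lemma mem_inNbrs {x : V} : x ∈ inNbrs A v ↔ (x, v) ∈ A := by
  simp [inNbrs]

lemma mem_outNbrs {x : V} : x ∈ outNbrs A v ↔ (v, x) ∈ A := by
  simp [outNbrs]

variable [Fintype V] (A v)

lemma inDeg_le_maxDeg : inDeg A v ≤ maxDeg A :=
  (le_max_left _ _).trans (le_sup (f := fun v => max (inDeg A v) (outDeg A v)) (mem_univ v))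

lemma outDeg_le_maxDeg : outDeg A v ≤ maxDeg A :=
  (le_max_right _ _).trans (le_sup (f := fun v => max (inDeg A v) (outDeg A v)) (mem_univ v))

lemma card_inNbrs_le_maxDeg : (inNbrs A v).card ≤ maxDeg A :=
  card_image_le.trans (inDeg_le_maxDeg A v)

lemma card_outNbrs_le_maxDeg : (outNbrs A v).card ≤ maxDeg A :=
  card_image_le.trans (outDeg_le_maxDeg A v)

end Neighbours

section TypeSet

variable {V : Type*} [Fintype V] [DecidableEq V] {A : Finset (V × V)} {τ : V → Finset (ℕ × ℕ)}

lemma mem_satType {t : ℕ × ℕ} {v : V} :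
    v ∈ satType A τ t ↔ deg A v + t ∈ τ v ∧ deg A v ∈ τ v := by
  simp [satType]

lemma IsTypeSet.deg_mem_of_notMem {α : ℕ} {C : Finset V} (hC : IsTypeSet A τ α C) {v : V}
    (hv : v ∉ C) : deg A v ∈ τ v :=
  not_not.1 (mt (hC.1 v) hv)

lemma card_satType_inter_eq {α : ℕ} {C : Finset V} (hC : IsTypeSet A τ α C)
    {t : ℕ × ℕ} (ht : t ≠ (0, 0)) {u : V} (hu : u ∈ satType A τ t) (huC : u ∉ C) :
    (satType A τ t ∩ C).card = α := by
  rw [hC.2 t ht, min_eq_right]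
  by_contra! h
  have hall : satType A τ t ∩ C = satType A τ t :=
    eq_of_subset_of_card_le inter_subset_left (by rw [hC.2 t ht, min_eq_left h.le])
  rw [← hall] at hu
  exact huC (mem_inter.1 hu).2

end TypeSet

section Solutions

variable {V : Type*} [DecidableEq V]

structure IsSolution (A : Finset (V × V)) (τ : V → Finset (ℕ × ℕ)) (s : ℕ)
    (B : Finset (V × V)) : Prop where
  notMem : ∀ a ∈ B, a ∉ A
  loopless : ∀ v : V, (v, v) ∉ B
  card_le : B.card ≤ s
  deg_mem : ∀ v : V, deg (A ∪ B) v ∈ τ v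

variable {A B : Finset (V × V)} {τ : V → Finset (ℕ × ℕ)} {s : ℕ}

lemma IsSolution.disjoint (hB : IsSolution A τ s B) : Disjoint A B :=
  disjoint_right.2 hB.notMem

open Equiv in
lemma IsSolution.mapArcs_swap (hB : IsSolution A τ s B) {u w : V}
    (hu : deg A u ∈ τ u) (hw : deg A w + deg B u ∈ τ w) (hwB : w ∉ endpoints B)
    (hwA : ∀ e ∈ B, (w, e.2) ∉ A ∧ (e.1, w) ∉ A) :
    IsSolution A τ s (mapArcs (swap u w) B) := by
  have hdisj : ∀ a ∈ mapArcs (swap u w) B, a ∉ A := by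
    simp only [mapArcs, mem_map, Equiv.coe_toEmbedding, Equiv.prodCongr_apply, Prod.map,
      forall_exists_index, and_imp]
    rintro _ e he rfl
    obtain ⟨h1, h2⟩ := notMem_endpoints.1 hwB e he
    by_cases hu1 : e.1 = u
    · have hu2 : e.2 ≠ u := fun h => hB.loopless u ((Prod.ext hu1 h : e = (u, u)) ▸ he)
      rw [hu1, swap_apply_left, swap_apply_of_ne_of_ne hu2 h2]
      exact (hwA e he).1
    by_cases hu2 : e.2 = u
    · rw [hu2, swap_apply_left, swap_apply_of_ne_of_ne hu1 h1]
      exact (hwA e he).2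
    rw [swap_apply_of_ne_of_ne hu1 h1, swap_apply_of_ne_of_ne hu2 h2]
    exact hB.notMem e he
  refine ⟨hdisj, fun v hv => ?_, (card_mapArcs _ B).trans_le hB.card_le, fun v => ?_⟩
  · obtain ⟨e, he, hev⟩ := mem_map.1 hv
    simp only [Equiv.coe_toEmbedding, Equiv.prodCongr_apply, Prod.map, Prod.mk.injEq] at hev
    have : e = (e.1, e.1) := Prod.ext rfl ((swap u w).injective (hev.2.trans hev.1.symm))
    exact hB.loopless e.1 (this ▸ he)
  rw [deg_union (disjoint_right.2 hdisj), deg_mapArcs, symm_swap]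
  by_cases hvu : v = u
  · subst hvu
    rw [swap_apply_left, deg_eq_zero_iff_notMem_endpoints.2 hwB]
    rwa [Prod.mk_zero_zero, add_zero]
  by_cases hvw : v = w
  · subst hvw
    rwa [swap_apply_right]
  rw [swap_apply_of_ne_of_ne hvu hvw, ← deg_union hB.disjoint]
  exact hB.deg_mem v

end Solutions

open Equiv in
lemma endpoints_mapArcs_swap_sdiff_ssubset {V : Type*} [DecidableEq V] {B : Finset (V × V)}
    {C : Finset V} {u w : V} (hu : u ∈ endpoints B) (huC : u ∉ C) (hwB : w ∉ endpoints B)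
    (hwC : w ∈ C) : endpoints (mapArcs (swap u w) B) \ C ⊂ endpoints B \ C := by
  refine LE.le.trans_ssubset (fun v hv => ?_) (erase_ssubset (mem_sdiff.2 ⟨hu, huC⟩))
  obtain ⟨hv, hvC⟩ := mem_sdiff.1 hv
  obtain ⟨x, hx, rfl⟩ := mem_image.1 (endpoints_mapArcs (swap u w) B ▸ hv)
  have hxw : x ≠ w := fun h => hwB (h ▸ hx)
  by_cases hxu : x = u
  · rw [hxu, swap_apply_left] at hvC
    exact absurd hwC hvC
  rw [swap_apply_of_ne_of_ne hxu hxw] at hvC ⊢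
  exact mem_erase.2 ⟨hxu, mem_sdiff.2 ⟨hx, hvC⟩⟩

section Relocation

variable {V : Type*} [Fintype V] [DecidableEq V] {A B : Finset (V × V)}
  {τ : V → Finset (ℕ × ℕ)} {s : ℕ} {C : Finset V}

lemma IsSolution.exists_relocation_target (hB : IsSolution A τ s B)
    (hC : IsTypeSet A τ (2 * s * (maxDeg A + 1)) C) {u : V} (hu : u ∈ endpoints B)
    (huC : u ∉ C) :
    ∃ w ∈ C, deg A w + deg B u ∈ τ w ∧ w ∉ endpoints B ∧
      ∀ e ∈ B, (w, e.2) ∉ A ∧ (e.1, w) ∉ A := by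
  set blocked := (endpoints B).erase u ∪ B.biUnion fun e => inNbrs A e.2 ∪ outNbrs A e.1
  have huT : u ∈ satType A τ (deg B u) :=
    mem_satType.2 ⟨deg_union hB.disjoint u ▸ hB.deg_mem u, hC.deg_mem_of_notMem huC⟩
  have hcard : (satType A τ (deg B u) ∩ C).card = 2 * s * (maxDeg A + 1) :=
    card_satType_inter_eq hC (fun h => deg_eq_zero_iff_notMem_endpoints.1 h hu) huT huC
  have hB_pos : 0 < B.card := by
    obtain ⟨a, ha, -⟩ := mem_endpoints.1 hu
    exact card_pos.2 ⟨a, ha⟩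
  have hblocked : blocked.card < 2 * s * (maxDeg A + 1) :=
    calc blocked.card
        ≤ ((endpoints B).erase u).card + ∑ e ∈ B, (inNbrs A e.2 ∪ outNbrs A e.1).card := by
          grw [card_union_le, card_biUnion_le]
      _ ≤ (2 * B.card - 1) + ∑ _e ∈ B, 2 * maxDeg A := by
          gcongr with e
          · rw [card_erase_of_mem hu]
            exact Nat.sub_le_sub_right (card_endpoints_le B) 1
          · grw [card_union_le, card_inNbrs_le_maxDeg, card_outNbrs_le_maxDeg, two_mul]
      _ < 2 * s * (maxDeg A + 1) := by
          have hBs := hB.card_le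
          have hBsΔ := Nat.mul_le_mul_right (maxDeg A) hBs
          have h1 : B.card * (2 * maxDeg A) = 2 * (B.card * maxDeg A) := by ring
          have h2 : 2 * s * (maxDeg A + 1) = 2 * (s * maxDeg A) + 2 * s := by ring
          rw [sum_const, smul_eq_mul, h1, h2]
          omega
  obtain ⟨w, hw, hwb⟩ := exists_mem_notMem_of_card_lt_card (hcard ▸ hblocked)
  obtain ⟨hwT, hwC⟩ := mem_inter.1 hw
  have hwu : w ≠ u := fun h => huC (h ▸ hwC)
  refine ⟨w, hwC, (mem_satType.1 hwT).1, fun h => hwb (mem_union_left _ (mem_erase.2 ⟨hwu, h⟩)),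
    fun e he => ⟨fun h => hwb ?_, fun h => hwb ?_⟩⟩ <;>
    refine mem_union_right _ (mem_biUnion.2 ⟨e, he, ?_⟩)
  · exact mem_union_left _ (mem_inNbrs.2 h)
  · exact mem_union_right _ (mem_outNbrs.2 h)

lemma IsSolution.exists_fewer_endpoints_outside (hB : IsSolution A τ s B)
    (hC : IsTypeSet A τ (2 * s * (maxDeg A + 1)) C) {u : V} (hu : u ∈ endpoints B)
    (huC : u ∉ C) :
    ∃ B', IsSolution A τ s B' ∧ (endpoints B' \ C).card < (endpoints B \ C).card := by
  obtain ⟨w, hwC, hw, hwB, hwA⟩ := hB.exists_relocation_target hC hu huC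
  exact ⟨_, hB.mapArcs_swap (hC.deg_mem_of_notMem huC) hw hwB hwA,
    card_lt_card (endpoints_mapArcs_swap_sdiff_ssubset hu huC hwB hwC)⟩

lemma IsSolution.exists_endpoints_subset (hB : IsSolution A τ s B)
    (hC : IsTypeSet A τ (2 * s * (maxDeg A + 1)) C) :
    ∃ B', IsSolution A τ s B' ∧ endpoints B' ⊆ C := by
  induction hn : (endpoints B \ C).card using Nat.strong_induction_on generalizing B with
  | _ n ih =>
  by_cases hsub : endpoints B ⊆ C
  · exact ⟨B, hB, hsub⟩
  obtain ⟨u, hu, huC⟩ := not_subset.1 hsub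
  obtain ⟨B', hB', hlt⟩ := hB.exists_fewer_endpoints_outside hC hu huC
  exact ih _ (hn ▸ hlt) hB' rfl

end Relocation

theorem solution_in_type_set_general {V : Type*} [Fintype V] [DecidableEq V]
    (A : Finset (V × V))
    (s : ℕ) (τ : V → Finset (ℕ × ℕ))
    (C : Finset V)
    (hC : IsTypeSet A τ (2 * s * (maxDeg A + 1)) C)
    (hex : ∃ A' : Finset (V × V),
      (∀ a ∈ A', a ∉ A) ∧ (∀ v : V, (v, v) ∉ A') ∧ A'.card ≤ s ∧
      (∀ v : V, deg (A ∪ A') v ∈ τ v)) :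
    ∃ A'' : Finset (V × V),
      A'' ⊆ C ×ˢ C ∧
      (∀ a ∈ A'', a ∉ A) ∧ (∀ v : V, (v, v) ∉ A'') ∧ A''.card ≤ s ∧
      (∀ v : V, deg (A ∪ A'') v ∈ τ v) := by
  obtain ⟨B, hnotMem, hloop, hcard, hdeg⟩ := hex
  obtain ⟨B', hB', hsub⟩ := (IsSolution.mk hnotMem hloop hcard hdeg).exists_endpoints_subset hC
  exact ⟨B', subset_product_of_endpoints_subset hsub, hB'.notMem, hB'.loopless, hB'.card_le,
    hB'.deg_mem⟩

/-- **Solutions inside a `2s(Δ_D+1)`-type set.** If a `DDConC` instance has a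
solution, then it has one all of whose arcs lie inside a given
`2s(Δ_D+1)`-type set `C`. -/
theorem solution_in_type_set {V : Type*} [Fintype V] [DecidableEq V]
    (A : Finset (V × V)) (hA : ∀ v : V, (v, v) ∉ A)
    (s : ℕ) (τ : V → Finset (ℕ × ℕ))
    (C : Finset V)
    (hC : IsTypeSet A τ (2 * s * (maxDeg A + 1)) C)
    (hex : ∃ A' : Finset (V × V),
      (∀ a ∈ A', a ∉ A) ∧ (∀ v : V, (v, v) ∉ A') ∧ A'.card ≤ s ∧
      (∀ v : V, deg (A ∪ A') v ∈ τ v)) :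
    ∃ A'' : Finset (V × V),
      A'' ⊆ C ×ˢ C ∧
      (∀ a ∈ A'', a ∉ A) ∧ (∀ v : V, (v, v) ∉ A'') ∧ A''.card ≤ s ∧
      (∀ v : V, deg (A ∪ A'') v ∈ τ v) :=
  solution_in_type_set_general A s τ C hC hex
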